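/- arXiv:1905.06519 — 6 statements merged into one kernel-verified Lean document; each statement's English description precedes it below -/
import Mathlib

section
/- The map eval is injective on valid sequences: if a and b are valid sequences and eval(a) = eval(b), then a = b. Hence every rational number has at most one natural representation as a valid sequence. -/
/-- A list of integers is a *valid sequence* if it is nonempty and every entry
other than the first and the last is nonzero. -/
def Valid (l : List ℤ) : Prop :=
  l ≠ [] ∧ ∀ x ∈ (l.drop 1).dropLast, x ≠ 0

/-- The evaluation of a sequence as a rational number:
`eval [s₀] = s₀`, and `eval (s₀ :: s₁ :: rest)` is
`s₀ - 1/(2 + eval (s₁ :: rest))` if `s₁ ≥ 0`, and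
`s₀ - 1 + 1/(2 + eval ((-s₁) :: (-rest)))` if `s₁ < 0`. -/
def eval : List ℤ → ℚ
  | [] => 0
  | [s] => (s : ℚ)
  | s₀ :: s₁ :: rest =>
    if 0 ≤ s₁ then (s₀ : ℚ) - 1 / (2 + eval (s₁ :: rest))
    else (s₀ : ℚ) - 1 + 1 / (2 + eval ((s₁ :: rest).map (fun x => -x)))
termination_by l => l.length
decreasing_by all_goals simp



lemma eval_single (s : ℤ) : eval [s] = s := by simp [eval]

lemma eval_cons_cons (s₀ s₁ : ℤ) (rest : List ℤ) :
    eval (s₀ :: s₁ :: rest) =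
    if 0 ≤ s₁ then (s₀ : ℚ) - 1 / (2 + eval (s₁ :: rest))
    else (s₀ : ℚ) - 1 + 1 / (2 + eval ((s₁ :: rest).map (fun x => -x))) := by
  rw [eval]

lemma valid_tail {s₀ s₁ : ℤ} {rest : List ℤ} (h : Valid (s₀ :: s₁ :: rest)) :
    Valid (s₁ :: rest) := by
  obtain ⟨-, h2⟩ := h
  refine ⟨by simp, fun x hx => ?_⟩
  apply h2
  simp only [List.drop_one, List.tail_cons] at *
  cases rest with
  | nil => simp at hx
  | cons r rs => simp [List.dropLast_cons_of_ne_nil] at hx ⊢; tauto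

lemma valid_neg {l : List ℤ} (h : Valid l) : Valid (l.map (fun x => -x)) := by
  obtain ⟨h1, h2⟩ := h
  refine ⟨by simpa using h1, fun x hx => ?_⟩
  simp only [← List.map_drop, ← List.map_dropLast, List.mem_map] at hx
  obtain ⟨y, hy, rfl⟩ := hx
  simpa using h2 y hy

lemma eval_bounds : ∀ n : ℕ, ∀ (h : ℤ) (t : List ℤ), (h::t).length ≤ n → Valid (h::t) →
    ((h:ℚ) - 1 < eval (h::t) ∧ eval (h::t) ≤ (h:ℚ) ∧ (t ≠ [] → eval (h::t) < h)) := by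
  intro n
  induction n with
  | zero => intro h t hl; simp at hl
  | succ n ih =>
    intro h t hl hv
    cases t with
    | nil => simp [eval_single]
    | cons s₁ rest =>
      rw [eval_cons_cons]
      by_cases hs : 0 ≤ s₁
      · simp only [if_pos hs]
        have hb := ih s₁ rest (by simpa using Nat.le_of_succ_le_succ hl) (valid_tail hv)
        have hs' : (0:ℚ) ≤ (s₁:ℚ) := by exact_mod_cast hs
        have h1 : (1:ℚ) < 2 + eval (s₁::rest) := by linarith [hb.1]
        have h2 : (0:ℚ) < 1/(2 + eval (s₁::rest)) := div_pos one_pos (by linarith)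
        have h3 : 1/(2 + eval (s₁::rest)) < 1 := by
          rw [div_lt_one (by linarith)]; linarith
        exact ⟨by linarith, by linarith, fun _ => by linarith⟩
      · push_neg at hs
        simp only [if_neg (not_le.mpr hs)]
        have hvt : Valid ((s₁::rest).map (fun x => -x)) := valid_neg (valid_tail hv)
        rw [List.map_cons] at hvt ⊢
        have hb := ih (-s₁) (rest.map (fun x => -x))
          (by simpa using Nat.le_of_succ_le_succ hl) hvt
        have hs0 : (1:ℤ) ≤ -s₁ := by omega
        have hs' : (1:ℚ) ≤ ((-s₁ : ℤ) : ℚ) := by exact_mod_cast hs0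
        push_cast at hs' hb
        have h1 : (0:ℚ) < eval ((-s₁)::(rest.map (fun x => -x))) := by linarith [hb.1]
        have h2 : (0:ℚ) < 1/(2 + eval ((-s₁)::(rest.map (fun x => -x)))) :=
          div_pos one_pos (by linarith)
        have h3 : 1/(2 + eval ((-s₁)::(rest.map (fun x => -x)))) < 1/2 := by
          apply one_div_lt_one_div_of_lt <;> linarith
        exact ⟨by linarith, by linarith, fun _ => by linarith⟩

lemma middle_ne {s₀ s₁ : ℤ} {r : List ℤ} (hv : Valid (s₀::s₁::r)) (hr : r ≠ []) : s₁ ≠ 0 := by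
  apply hv.2
  simp [List.dropLast_cons_of_ne_nil hr]

lemma branch_pos {s₀ s₁ : ℤ} {r : List ℤ} (hv : Valid (s₀::s₁::r)) (hs : 1 ≤ s₁) :
    -1/2 < eval (s₀::s₁::r) - (s₀:ℚ) ∧ eval (s₀::s₁::r) - (s₀:ℚ) < 0 := by
  rw [eval_cons_cons, if_pos (by omega)]
  have hb := eval_bounds (s₁::r).length s₁ r le_rfl (valid_tail hv)
  have hs' : (1:ℚ) ≤ (s₁:ℚ) := by exact_mod_cast hs
  have h1 : (0:ℚ) < eval (s₁::r) := by linarith [hb.1]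
  have h2 : (0:ℚ) < 1/(2 + eval (s₁::r)) := div_pos one_pos (by linarith)
  have h3 : 1/(2 + eval (s₁::r)) < 1/2 := by
    apply one_div_lt_one_div_of_lt <;> linarith
  constructor <;> linarith

lemma branch_zero {s₀ s₁ : ℤ} {r : List ℤ} (hv : Valid (s₀::s₁::r)) (hs : s₁ = 0) :
    r = [] ∧ eval (s₀::s₁::r) = (s₀:ℚ) - 1/2 := by
  have hr : r = [] := by
    by_contra hr
    exact middle_ne hv hr hs
  subst hr hs
  rw [eval_cons_cons, if_pos le_rfl]
  norm_num [eval_single]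

lemma branch_neg {s₀ s₁ : ℤ} {r : List ℤ} (hv : Valid (s₀::s₁::r)) (hs : s₁ < 0) :
    -1 < eval (s₀::s₁::r) - (s₀:ℚ) ∧ eval (s₀::s₁::r) - (s₀:ℚ) < -1/2 := by
  rw [eval_cons_cons, if_neg (not_le.mpr hs), List.map_cons]
  have hvt : Valid ((-s₁)::(r.map (fun x => -x))) := by
    have := valid_neg (valid_tail hv); rwa [List.map_cons] at this
  have hb := eval_bounds _ (-s₁) (r.map (fun x => -x)) le_rfl hvt
  have hs0 : (1:ℤ) ≤ -s₁ := by omega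
  have hs' : (1:ℚ) ≤ ((-s₁:ℤ):ℚ) := by exact_mod_cast hs0
  push_cast at hs' hb
  have h1 : (0:ℚ) < eval ((-s₁)::(r.map (fun x => -x))) := by linarith [hb.1]
  have h2 : (0:ℚ) < 1/(2 + eval ((-s₁)::(r.map (fun x => -x)))) := div_pos one_pos (by linarith)
  have h3 : 1/(2 + eval ((-s₁)::(r.map (fun x => -x)))) < 1/2 := by
    apply one_div_lt_one_div_of_lt <;> linarith
  constructor <;> linarith

lemma main_aux : ∀ n : ℕ, ∀ a b : List ℤ, a.length ≤ n → Valid a → Valid b →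
    eval a = eval b → a = b := by
  intro n
  induction n with
  | zero => intro a b hl hva _ _; exact absurd (List.length_eq_zero_iff.mp (Nat.le_zero.mp hl)) hva.1
  | succ n ih =>
    rintro (_|⟨h, t⟩) b hl hva hvb heq
    · exact absurd rfl hva.1
    obtain (_|⟨h', t'⟩) := b
    · exact absurd rfl hvb.1
    cases t with
    | nil =>
      cases t' with
      | nil =>
        rw [eval_single, eval_single] at heq
        have : h = h' := by exact_mod_cast heq
        rw [this]
      | cons t₁ rb =>
        rw [eval_single] at heq
        have hb := eval_bounds _ h' (t₁::rb) le_rfl hvb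
        have h1 : (h':ℚ) - 1 < (h:ℚ) := by rw [heq]; exact hb.1
        have h2 : (h:ℚ) < (h':ℚ) := by rw [heq]; exact hb.2.2 (by simp)
        have h1' : h' - 1 < h := by exact_mod_cast h1
        have h2' : h < h' := by exact_mod_cast h2
        omega
    | cons s₁ ra =>
      cases t' with
      | nil =>
        rw [eval_single] at heq
        have hb := eval_bounds _ h (s₁::ra) le_rfl hva
        have h1 : (h:ℚ) - 1 < (h':ℚ) := by rw [← heq]; exact hb.1
        have h2 : (h':ℚ) < (h:ℚ) := by rw [← heq]; exact hb.2.2 (by simp)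
        have h1' : h - 1 < h' := by exact_mod_cast h1
        have h2' : h' < h := by exact_mod_cast h2
        omega
      | cons t₁ rb =>
        -- heads equal
        have hba := eval_bounds _ h (s₁::ra) le_rfl hva
        have hbb := eval_bounds _ h' (t₁::rb) le_rfl hvb
        have hlta : eval (h::s₁::ra) < h := hba.2.2 (by simp)
        have hltb : eval (h'::t₁::rb) < h' := hbb.2.2 (by simp)
        have hh : h = h' := by
          have e1 : (h:ℚ) - 1 < h' := by linarith [hba.1, heq ▸ hltb]
          have e2 : (h':ℚ) - 1 < h := by linarith [hbb.1, heq ▸ hlta]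
          have e1' : h - 1 < h' := by exact_mod_cast e1
          have e2' : h' - 1 < h := by exact_mod_cast e2
          omega
        subst hh
        -- sign analysis
        have hlen : (s₁::ra).length ≤ n := by simpa using Nat.le_of_succ_le_succ hl
        rcases lt_trichotomy s₁ 0 with hs | hs | hs <;>
          rcases lt_trichotomy t₁ 0 with ht | ht | ht
        · -- both negative
          have heq' : eval ((s₁::ra).map (fun x => -x)) = eval ((t₁::rb).map (fun x => -x)) := by
            rw [eval_cons_cons, if_neg (not_le.mpr hs)] at heq
            rw [eval_cons_cons, if_neg (not_le.mpr ht)] at heq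
            have hpa := eval_bounds _ (-s₁) (ra.map (fun x => -x)) le_rfl
              (by have := valid_neg (valid_tail hva); rwa [List.map_cons] at this)
            have hpb := eval_bounds _ (-t₁) (rb.map (fun x => -x)) le_rfl
              (by have := valid_neg (valid_tail hvb); rwa [List.map_cons] at this)
            have ca : (1:ℚ) ≤ ((-s₁:ℤ):ℚ) := by exact_mod_cast (by omega : (1:ℤ) ≤ -s₁)
            have cb : (1:ℚ) ≤ ((-t₁:ℤ):ℚ) := by exact_mod_cast (by omega : (1:ℤ) ≤ -t₁)
            simp only [List.map_cons] at heq ⊢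
            set Ea := eval ((-s₁)::(ra.map (fun x => -x))) with hEa
            set Eb := eval ((-t₁)::(rb.map (fun x => -x))) with hEb
            have pa : (0:ℚ) < 2 + Ea := by linarith [hpa.1]
            have pb : (0:ℚ) < 2 + Eb := by linarith [hpb.1]
            have : 1/(2+Ea) = 1/(2+Eb) := by linarith
            rw [div_eq_div_iff pa.ne' pb.ne'] at this
            linarith
          have := ih _ _ (by simpa using hlen) (valid_neg (valid_tail hva))
            (valid_neg (valid_tail hvb)) heq'
          have hinj : Function.Injective (fun x : ℤ => -x) := fun a b hab => by
            simpa using hab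
          have := List.map_injective_iff.mpr hinj this
          rw [this]
        · -- s₁ < 0, t₁ = 0 : contradiction
          have b1 := branch_neg hva hs
          have b2 := (branch_zero hvb ht).2
          rw [heq] at b1; linarith [b1.2]
        · have b1 := branch_neg hva hs
          have b2 := branch_pos hvb (by omega)
          rw [heq] at b1; linarith [b1.2, b2.1]
        · have b1 := (branch_zero hva hs).2
          have b2 := branch_neg hvb ht
          rw [← heq] at b2; linarith [b2.2]
        · -- both zero
          obtain ⟨ha0, -⟩ := branch_zero hva hs
          obtain ⟨hb0, -⟩ := branch_zero hvb ht
          rw [ha0, hb0, hs, ht]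
        · have b1 := (branch_zero hva hs).2
          have b2 := branch_pos hvb (by omega)
          rw [← heq] at b2; linarith [b2.1]
        · have b1 := branch_pos hva (by omega)
          have b2 := branch_neg hvb ht
          rw [heq] at b1; linarith [b1.1, b2.2]
        · have b1 := branch_pos hva (by omega)
          have b2 := (branch_zero hvb ht).2
          rw [heq] at b1; linarith [b1.1]
        · -- both positive
          have heq' : eval (s₁::ra) = eval (t₁::rb) := by
            rw [eval_cons_cons, if_pos (by omega : (0:ℤ) ≤ s₁)] at heq
            rw [eval_cons_cons, if_pos (by omega : (0:ℤ) ≤ t₁)] at heq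
            have hpa := eval_bounds _ s₁ ra le_rfl (valid_tail hva)
            have hpb := eval_bounds _ t₁ rb le_rfl (valid_tail hvb)
            have ca : (1:ℚ) ≤ (s₁:ℚ) := by exact_mod_cast hs
            have cb : (1:ℚ) ≤ (t₁:ℚ) := by exact_mod_cast ht
            have pa : (0:ℚ) < 2 + eval (s₁::ra) := by linarith [hpa.1]
            have pb : (0:ℚ) < 2 + eval (t₁::rb) := by linarith [hpb.1]
            have : 1/(2+eval (s₁::ra)) = 1/(2+eval (t₁::rb)) := by linarith
            rw [div_eq_div_iff pa.ne' pb.ne'] at this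
            linarith
          have := ih _ _ hlen (valid_tail hva) (valid_tail hvb) heq'
          rw [this]

theorem eval_injective_on_valid :
    ∀ a b : List ℤ, Valid a → Valid b → eval a = eval b → a = b := by
  intro a b hva hvb heq
  exact main_aux a.length a b le_rfl hva hvb heq
end

section
/- Entrywise negation implements the reflection of the extended Stern–Brocot tree around −1/2: for every valid sequence l of length at least 2, the entrywise negation of l is again a valid sequence and eval(entrywise negation of l) = −1 − eval(l). (Equivalently, non-integer rationals whose natural representations have opposite signs sum to −1.) -/
lemma map_neg_neg (l : List ℤ) :
    (l.map (fun x : ℤ => -x)).map (fun x : ℤ => -x) = l := by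
  simp [List.map_map, Function.comp]

theorem eval_map_neg :
    ∀ l : List ℤ, Valid l → 2 ≤ l.length →
      Valid (l.map (fun x => -x)) ∧
      eval (l.map (fun x => -x)) = -1 - eval l := by
  rintro (_ | ⟨s₀, _ | ⟨s₁, rest⟩⟩) hv hlen
  · simp at hlen
  · simp at hlen
  · constructor
    · refine ⟨by simp, ?_⟩
      intro x hx
      rw [List.map_cons, List.map_cons] at hx
      simp only [List.drop_one, List.tail_cons] at hx
      rw [← List.map_cons, ← List.map_dropLast] at hx
      obtain ⟨y, hy, rfl⟩ := List.mem_map.1 hx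
      have := hv.2 y (by simpa using hy)
      simpa using this
    · rcases lt_trichotomy s₁ 0 with h | h | h
      · have h1 : ¬ (0 ≤ s₁) := not_le.2 h
        have h2 : (0 : ℤ) ≤ -s₁ := by omega
        rw [List.map_cons, List.map_cons]
        rw [show eval (-s₀ :: -s₁ :: List.map (fun x => -x) rest)
            = (-s₀ : ℚ) - 1 / (2 + eval (-s₁ :: List.map (fun x => -x) rest))
            from by rw [eval, if_pos h2]; push_cast; ring]
        rw [show eval (s₀ :: s₁ :: rest)
            = (s₀ : ℚ) - 1 + 1 / (2 + eval ((s₁ :: rest).map (fun x => -x)))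
            from by rw [eval]; simp [h1]]
        simp only [List.map_cons]
        push_cast
        ring
      · -- s₁ = 0 : validity forces rest = []
        subst h
        rcases rest with _ | ⟨r, rs⟩
        · simp [eval]
          ring
        · exfalso
          exact hv.2 0 (by simp) rfl
      · have h1 : (0 : ℤ) ≤ s₁ := le_of_lt h
        have h2 : ¬ ((0 : ℤ) ≤ -s₁) := by omega
        rw [List.map_cons, List.map_cons]
        rw [show eval (-s₀ :: -s₁ :: List.map (fun x => -x) rest)
            = (-s₀ : ℚ) - 1 + 1 / (2 + eval ((-s₁ :: List.map (fun x => -x) rest).map (fun x => -x)))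
            from by rw [eval, if_neg h2]; push_cast; ring]
        rw [show eval (s₀ :: s₁ :: rest)
            = (s₀ : ℚ) - 1 / (2 + eval (s₁ :: rest))
            from by rw [eval]; simp [h1]]
        rw [show ((-s₁ :: List.map (fun x : ℤ => -x) rest).map (fun x => -x))
            = s₁ :: rest from by
          have := map_neg_neg (s₁ :: rest)
          simpa using this]
        push_cast
        ring
end

section
/- Define the height of a valid sequence l to be the length of l plus the sum of the absolute values of its entries. Then the only valid sequence of height 1 is [0], and for every h ≥ 2 the number of valid sequences of height h is exactly 3·2^(h−2). -/
/-- The height of a sequence: its length plus the sum of the absolute values of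
its entries. -/
def height (l : List ℤ) : ℕ :=
  l.length + (l.map Int.natAbs).sum

namespace VHC

/-- The set of valid sequences of height `h`. -/
def S (h : ℕ) : Set (List ℤ) := {l | Valid l ∧ height l = h}

lemma height_cons (a : ℤ) (l : List ℤ) : height (a :: l) = a.natAbs + height l + 1 := by
  simp [height]; ring

lemma height_nil : height ([] : List ℤ) = 0 := rfl

/-- The doubling step: each valid sequence of height `h ≥ 2` yields, for each of the
two booleans, a valid sequence of height `h + 1`. -/
def step (b : Bool) : List ℤ → List ℤ
  | [] => []
  | t :: ts =>
    if t = 0 then (if b then 1 else -1) :: ts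
    else if b then 0 :: t :: ts
    else (if 0 < t then t + 1 else t - 1) :: ts

/-- The inverse of `step`. -/
def unstep : List ℤ → List ℤ
  | [] => []
  | s :: ss => if s = 0 then ss else (if 0 < s then s - 1 else s + 1) :: ss

lemma step_zero (b : Bool) (ts : List ℤ) :
    step b (0 :: ts) = (if b then 1 else -1) :: ts := by simp [step]

lemma step_true (t : ℤ) (ht : t ≠ 0) (ts : List ℤ) :
    step true (t :: ts) = 0 :: t :: ts := by simp [step, ht]

lemma step_false (t : ℤ) (ht : t ≠ 0) (ts : List ℤ) :
    step false (t :: ts) = (if 0 < t then t + 1 else t - 1) :: ts := by simp [step, ht]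

lemma unstep_step (b : Bool) (t : ℤ) (ts : List ℤ) :
    unstep (step b (t :: ts)) = t :: ts := by
  by_cases ht : t = 0
  · subst ht
    cases b <;> simp [step, unstep]
  · cases b
    · by_cases hpos : 0 < t
      · have h1 : ¬ (t + 1 = 0) := by omega
        have h2 : 0 < t + 1 := by omega
        simp [step, unstep, ht, hpos, h1, h2]
      · have h1 : ¬ (t - 1 = 0) := by omega
        have h2 : ¬ (0 < t - 1) := by omega
        simp [step, unstep, ht, hpos, h1, h2]; omega
    · simp [step, unstep, ht]

lemma step_mem {h : ℕ} (hh : 2 ≤ h) (b : Bool) {l : List ℤ} (hl : l ∈ S h) :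
    step b l ∈ S (h + 1) := by
  obtain ⟨⟨hne, hint⟩, hht⟩ := hl
  match l with
  | [] => exact absurd rfl hne
  | t :: ts =>
    simp only [List.drop_succ_cons, List.drop_zero] at hint
    by_cases ht : t = 0
    · subst ht
      have hts : ts ≠ [] := by
        rintro rfl
        rw [height_cons, height_nil] at hht
        omega
      rw [step_zero]
      refine ⟨⟨by simp, ?_⟩, ?_⟩
      · simpa using hint
      · rw [height_cons] at hht
        rw [height_cons]
        cases b <;> simp <;> omega
    · cases b
      · rw [step_false t ht]
        refine ⟨⟨by simp, ?_⟩, ?_⟩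
        · simpa using hint
        · rw [height_cons] at hht
          rw [height_cons]
          by_cases hpos : 0 < t <;> simp [hpos] <;> omega
      · rw [step_true t ht]
        refine ⟨⟨by simp, ?_⟩, ?_⟩
        · simp only [List.drop_succ_cons, List.drop_zero]
          intro x hx
          cases ts with
          | nil => simp at hx
          | cons u us =>
            rw [List.dropLast_cons_of_ne_nil (by simp)] at hx
            rcases List.mem_cons.mp hx with hx | hx
            · subst hx; exact ht
            · exact hint x hx
        · rw [height_cons] at hht
          rw [height_cons, height_cons]
          simp; omega

lemma step_injOn (b : Bool) (h : ℕ) : Set.InjOn (step b) (S h) := by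
  rintro x ⟨⟨hnex, -⟩, -⟩ y ⟨⟨hney, -⟩, -⟩ hxy
  match x, hnex, y, hney with
  | tx :: tsx, _, ty :: tsy, _ =>
    rw [← unstep_step b tx tsx, ← unstep_step b ty tsy, hxy]

lemma step_disjoint (h : ℕ) : Disjoint (step true '' S h) (step false '' S h) := by
  rw [Set.disjoint_left]
  rintro m ⟨x, ⟨⟨hnex, -⟩, -⟩, rfl⟩ ⟨y, ⟨⟨hney, -⟩, -⟩, hm⟩
  match x, hnex, y, hney with
  | tx :: tsx, _, ty :: tsy, _ =>
    by_cases hx : tx = 0 <;> by_cases hy : ty = 0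
    · subst hx; subst hy
      rw [step_zero, step_zero] at hm
      simp at hm
    · subst hx
      rw [step_zero] at hm
      rw [step_false ty hy] at hm
      simp only [if_true] at hm
      by_cases hpos : 0 < ty <;> simp [hpos] at hm <;> omega
    · subst hy
      rw [step_zero] at hm
      rw [step_true tx hx] at hm
      simp at hm
    · rw [step_true tx hx, step_false ty hy] at hm
      by_cases hpos : 0 < ty <;> simp [hpos] at hm <;> omega

lemma step_surj {h : ℕ} (hh : 2 ≤ h) :
    S (h + 1) ⊆ step true '' S h ∪ step false '' S h := by
  rintro m ⟨⟨hne, hint⟩, hht⟩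
  match m, hne with
  | s :: ss, _ =>
    simp only [List.drop_succ_cons, List.drop_zero] at hint
    rw [height_cons] at hht
    by_cases hs : s = 0
    · subst hs
      have hss : ss ≠ [] := by
        rintro rfl; rw [height_nil] at hht; omega
      match ss, hss with
      | u :: us, _ =>
        rw [height_cons] at hht
        have hu : u ≠ 0 := by
          cases us with
          | nil =>
            intro h0; subst h0
            rw [height_nil] at hht; simp at hht; omega
          | cons v vs =>
            apply hint
            rw [List.dropLast_cons_of_ne_nil (by simp)]
            exact List.mem_cons_self
        left
        refine ⟨u :: us, ⟨⟨by simp, ?_⟩, ?_⟩, step_true u hu us⟩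
        · simp only [List.drop_succ_cons, List.drop_zero]
          intro x hx
          apply hint
          cases us with
          | nil => simp at hx
          | cons v vs =>
            rw [List.dropLast_cons_of_ne_nil (by simp)]
            exact List.mem_cons_of_mem _ hx
        · rw [height_cons]; omega
    · by_cases h1 : s = 1
      · subst h1
        left
        refine ⟨0 :: ss, ⟨⟨by simp, by simpa using hint⟩, ?_⟩, ?_⟩
        · rw [height_cons]; simp at hht ⊢; omega
        · rw [step_zero]; simp
      · by_cases h2 : s = -1
        · subst h2
          right
          refine ⟨0 :: ss, ⟨⟨by simp, by simpa using hint⟩, ?_⟩, ?_⟩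
          · rw [height_cons]; simp at hht ⊢; omega
          · rw [step_zero]; simp
        · right
          by_cases hpos : 0 < s
          · have hne1 : s - 1 ≠ 0 := by omega
            refine ⟨(s - 1) :: ss, ⟨⟨by simp, by simpa using hint⟩, ?_⟩, ?_⟩
            · rw [height_cons]; omega
            · rw [step_false _ hne1]
              have : 0 < s - 1 := by omega
              simp [this]; omega
          · have hne1 : s + 1 ≠ 0 := by omega
            refine ⟨(s + 1) :: ss, ⟨⟨by simp, by simpa using hint⟩, ?_⟩, ?_⟩
            · rw [height_cons]; omega
            · rw [step_false _ hne1]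
              have : ¬ (0 < s + 1) := by omega
              simp [this]

lemma S_one : S 1 = {[0]} := by
  ext l
  simp only [S, Set.mem_setOf_eq, Set.mem_singleton_iff]
  constructor
  · rintro ⟨⟨hne, hint⟩, hht⟩
    match l, hne with
    | a :: ts, _ =>
      rw [height_cons] at hht
      have hts : ts = [] := by
        cases ts with
        | nil => rfl
        | cons b us => rw [height_cons] at hht; omega
      subst hts
      rw [height_nil] at hht
      have : a = 0 := by omega
      rw [this]
  · rintro rfl
    exact ⟨⟨by simp, by simp⟩, by rw [height_cons, height_nil]; rfl⟩

lemma S_two : S 2 = {[1], [-1], [0, 0]} := by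
  ext l
  simp only [S, Set.mem_setOf_eq, Set.mem_insert_iff, Set.mem_singleton_iff]
  constructor
  · rintro ⟨⟨hne, hint⟩, hht⟩
    match l, hne with
    | a :: ts, _ =>
      rw [height_cons] at hht
      cases ts with
      | nil =>
        rw [height_nil] at hht
        have : a = 1 ∨ a = -1 := by omega
        rcases this with rfl | rfl
        · left; rfl
        · right; left; rfl
      | cons b us =>
        rw [height_cons] at hht
        have hus : us = [] := by
          cases us with
          | nil => rfl
          | cons c vs => rw [height_cons] at hht; omega
        subst hus
        rw [height_nil] at hht
        have ha : a = 0 := by omega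
        have hb : b = 0 := by omega
        right; right; rw [ha, hb]
  · rintro (rfl | rfl | rfl) <;>
      exact ⟨⟨by simp [Valid], by simp⟩, by simp [height]⟩

lemma ncard_S_two : (S 2).ncard = 3 := by
  rw [S_two, Set.ncard_eq_three]
  exact ⟨[1], [-1], [0, 0], by simp, by simp, by simp, rfl⟩

lemma S_two_finite : (S 2).Finite := by
  rw [S_two]
  exact (Set.finite_singleton _).insert _ |>.insert _

lemma main : ∀ h : ℕ, 2 ≤ h → (S h).Finite ∧ (S h).ncard = 3 * 2 ^ (h - 2) := by
  intro h hh
  induction h, hh using Nat.le_induction with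
  | base => exact ⟨S_two_finite, by simp [ncard_S_two]⟩
  | succ h hh ih =>
    obtain ⟨hfin, hcard⟩ := ih
    have hdec : S (h + 1) = step true '' S h ∪ step false '' S h := by
      refine Set.Subset.antisymm (step_surj hh) ?_
      rintro m (⟨x, hx, rfl⟩ | ⟨x, hx, rfl⟩)
      · exact step_mem hh true hx
      · exact step_mem hh false hx
    refine ⟨by rw [hdec]; exact (hfin.image _).union (hfin.image _), ?_⟩
    rw [hdec, Set.ncard_union_eq (step_disjoint h) (hfin.image _) (hfin.image _),
      Set.ncard_image_of_injOn (step_injOn true h),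
      Set.ncard_image_of_injOn (step_injOn false h), hcard,
      show h + 1 - 2 = (h - 2) + 1 from by omega, pow_succ]
    ring

end VHC

theorem valid_height_count :
    {l : List ℤ | Valid l ∧ height l = 1} = {[0]} ∧
    ∀ h : ℕ, 2 ≤ h →
      {l : List ℤ | Valid l ∧ height l = h}.ncard = 3 * 2 ^ (h - 2) := by
  exact ⟨VHC.S_one, fun h hh => (VHC.main h hh).2⟩
end

section
/- Every rational number strictly between 0 and 1 is represented by the subtractive continued fraction with non-negative terms: for all natural numbers n and d with 0 < n < d, there exists a nonempty list t of natural numbers such that F(t) = n/d. -/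
/-- The subtractive continued fraction with non-negative terms:
`F [] = 0` and `F (m :: t) = 1/(2 + m - F t)`. -/
def F : List ℕ → ℚ
  | [] => 0
  | m :: t => 1 / (2 + (m : ℚ) - F t)

theorem F_surjective_on_unit_interval :
    ∀ n d : ℕ, 0 < n → n < d →
      ∃ t : List ℕ, t ≠ [] ∧ F t = (n : ℚ) / (d : ℚ) := by
  have key : ∀ d : ℕ, ∀ n : ℕ, 0 < n → n < d →
      ∃ t : List ℕ, t ≠ [] ∧ F t = (n : ℚ) / (d : ℚ) := by
    intro d
    induction d using Nat.strong_induction_on with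
    | _ d ih =>
      intro n hn hnd
      set q := (d - 1) / n with hq
      set k := q + 1 with hk
      have hmod : n * q + (d - 1) % n = d - 1 := Nat.div_add_mod (d-1) n
      have hr : (d - 1) % n < n := Nat.mod_lt _ hn
      -- q ≥ 1 since d - 1 ≥ n
      have hq1 : 1 ≤ q := by
        rw [hq]
        exact (Nat.one_le_div_iff hn).2 (by omega)
      have hk2 : 2 ≤ k := by omega
      -- d ≤ n * k < d + n
      have hnk : d ≤ n * k ∧ n * k < d + n := by
        have hkn : n * k = n * q + n := by rw [hk]; ring
        omega
      set n' := n * k - d with hn'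
      have hn'lt : n' < n := by omega
      have hsum : n' + d = n * k := by omega
      have hcast : (n' : ℚ) + d = n * k := by exact_mod_cast congrArg (Nat.cast : ℕ → ℚ) hsum
      have hkcast : ((k - 2 : ℕ) : ℚ) = (k : ℚ) - 2 := by
        push_cast [hk2]; ring
      have hd0 : (d : ℚ) ≠ 0 := Nat.cast_ne_zero.2 (by omega)
      have hn0 : (n : ℚ) ≠ 0 := Nat.cast_ne_zero.2 (by omega)
      by_cases h0 : n' = 0
      · refine ⟨[k - 2], by simp, ?_⟩
        have : (n : ℚ) * k = d := by rw [← hcast, h0]; push_cast; ring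
        simp only [F, hkcast]
        rw [div_eq_div_iff (by linarith [show (0:ℚ) < n from by positivity, this]) hd0] at *
        field_simp
        linarith
      · obtain ⟨t, ht, hFt⟩ := ih n hnd n' (Nat.pos_of_ne_zero h0) hn'lt
        refine ⟨(k - 2) :: t, by simp, ?_⟩
        simp only [F, hkcast, hFt]
        rw [div_eq_div_iff (by
          have : (n' : ℚ) / n < 1 := by
            rw [div_lt_one (by positivity)]
            exact_mod_cast hn'lt
          have hk2' : (2 : ℚ) ≤ (k : ℚ) := by exact_mod_cast hk2
          linarith) hd0]
        field_simp
        linarith [hcast]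
  intro n d hn hnd
  exact key d n hn hnd
end

section
/- For every natural number n, eval applied to the list consisting of a 1 followed by n further 1's equals fib(2n+1)/fib(2n+2), where fib is the Fibonacci sequence with fib(1) = fib(2) = 1; for example eval([1,1,1,1,1,1]) = 89/144. -/
theorem eval_ones_eq_fib_ratio :
    (∀ n : ℕ, eval ((1 : ℤ) :: List.replicate n 1) =
      (Nat.fib (2 * n + 1) : ℚ) / (Nat.fib (2 * n + 2) : ℚ)) ∧
    eval [1, 1, 1, 1, 1, 1] = 89 / 144 := by
  have key : ∀ n : ℕ, eval ((1 : ℤ) :: List.replicate n 1) =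
      (Nat.fib (2 * n + 1) : ℚ) / (Nat.fib (2 * n + 2) : ℚ) := by
    intro n
    induction n with
    | zero => simp [eval]
    | succ n ih =>
      have hb : (0:ℚ) < (Nat.fib (2*n+2) : ℚ) := by
        exact_mod_cast Nat.fib_pos.mpr (by omega)
      have ha : (0:ℚ) ≤ (Nat.fib (2*n+1) : ℚ) := by positivity
      have hden : (0:ℚ) < 2 + eval ((1:ℤ) :: List.replicate n 1) := by
        rw [ih]; positivity
      rw [List.replicate_succ, show eval ((1:ℤ) :: 1 :: List.replicate n 1)
        = 1 - 1/(2 + eval ((1:ℤ) :: List.replicate n 1)) from by rw [eval]; norm_num]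
      rw [ih]
      have h3 : Nat.fib (2*(n+1)+1) = Nat.fib (2*n+1) + Nat.fib (2*n+2) := by
        rw [show 2*(n+1)+1 = (2*n+1)+2 by ring, Nat.fib_add_two,
          show 2*n+1+1 = 2*n+2 by ring]
      have h4 : Nat.fib (2*(n+1)+2) = Nat.fib (2*n+2) + Nat.fib (2*(n+1)+1) := by
        rw [show 2*(n+1)+2 = (2*n+2)+2 by ring, Nat.fib_add_two,
          show 2*n+2+1 = 2*(n+1)+1 by ring]
      rw [h4, h3]
      push_cast
      field_simp
      ring
  refine ⟨key, ?_⟩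
  have := key 5
  norm_num [List.replicate] at this
  exact this
end

section
/- Define the rational sequence q by q(0) = 2 and q(n+1) = 2 − 1/(2 + q(n)). Then for every n, q(n) = eval applied to the list consisting of a 2 followed by n further 2's, and the real sequence (q(n) : ℝ) converges to √3. (That is, the truncations of the natural representation [2; 2, 2, 2, …] converge to √3.) -/
/-- The truncations of the natural representation `[2; 2, 2, 2, …]`:
`q 0 = 2` and `q (n+1) = 2 - 1/(2 + q n)`. -/
def q : ℕ → ℚ
  | 0 => 2
  | n + 1 => 2 - 1 / (2 + q n)

lemma q_bounds : ∀ n, 1 ≤ q n ∧ q n ≤ 2 := by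
  intro n
  induction n with
  | zero => norm_num [q]
  | succ n ih =>
    obtain ⟨h1, h2⟩ := ih
    have h3 : (3:ℚ) ≤ 2 + q n := by linarith
    have h4 : (2:ℚ) + q n ≤ 4 := by linarith
    have hpos : (0:ℚ) < 2 + q n := by linarith
    constructor
    · show 1 ≤ 2 - 1 / (2 + q n)
      have : 1 / (2 + q n) ≤ 1/3 := by
        rw [div_le_div_iff₀ hpos (by norm_num)]; linarith
      linarith
    · show 2 - 1 / (2 + q n) ≤ 2
      have : 0 ≤ 1 / (2 + q n) := by positivity
      linarith

lemma abs_bound : ∀ n, |(q n : ℝ) - Real.sqrt 3| ≤ (1/9)^n := by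
  have hs2 : Real.sqrt 3 ^ 2 = 3 := Real.sq_sqrt (by norm_num)
  have hs1 : (1:ℝ) ≤ Real.sqrt 3 := by
    nlinarith [Real.sqrt_nonneg 3]
  have hs4 : Real.sqrt 3 ≤ 2 := by
    nlinarith [Real.sqrt_nonneg 3]
  intro n
  induction n with
  | zero =>
    simp [q]
    rw [abs_of_nonneg (by linarith)]
    linarith
  | succ n ih =>
    obtain ⟨h1, h2⟩ := q_bounds n
    have h1' : (1:ℝ) ≤ (q n : ℝ) := by exact_mod_cast h1
    have h2' : (q n : ℝ) ≤ 2 := by exact_mod_cast h2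
    have hne : (2:ℝ) + q n ≠ 0 := by linarith
    have hq : ((q (n+1) : ℚ) : ℝ) = 2 - 1 / (2 + (q n : ℝ)) := by
      show ((2 - 1 / (2 + q n) : ℚ) : ℝ) = _
      push_cast
      ring
    rw [hq]
    have key : (2 - 1 / (2 + (q n : ℝ))) - Real.sqrt 3
        = ((q n : ℝ) - Real.sqrt 3) / ((2 + (q n : ℝ)) * (2 + Real.sqrt 3)) := by
      have hne2 : (2:ℝ) + Real.sqrt 3 ≠ 0 := by linarith
      rw [eq_div_iff (by nlinarith : ((2 + (q n : ℝ)) * (2 + Real.sqrt 3)) ≠ 0)]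
      field_simp
      linear_combination (-(2 + ((q n : ℚ) : ℝ))) * hs2
    rw [key, abs_div, abs_of_pos (by nlinarith : (0:ℝ) < (2 + (q n : ℝ)) * (2 + Real.sqrt 3))]
    have h9 : (9:ℝ) ≤ (2 + (q n : ℝ)) * (2 + Real.sqrt 3) := by nlinarith
    calc |(q n : ℝ) - Real.sqrt 3| / ((2 + (q n : ℝ)) * (2 + Real.sqrt 3))
        ≤ |(q n : ℝ) - Real.sqrt 3| / 9 := by
          apply div_le_div_of_nonneg_left (abs_nonneg _) (by norm_num) h9
      _ ≤ (1/9)^n / 9 := by apply div_le_div_of_nonneg_right ih (by norm_num)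
      _ = (1/9)^(n+1) := by ring

theorem q_eq_eval_twos_and_tendsto_sqrt_three :
    (∀ n : ℕ, q n = eval ((2 : ℤ) :: List.replicate n 2)) ∧
    Filter.Tendsto (fun n => (q n : ℝ)) Filter.atTop (nhds (Real.sqrt 3)) := by
  constructor
  · intro n
    induction n with
    | zero => simp [q, eval]
    | succ n ih =>
      show (2 - 1 / (2 + q n) : ℚ) = _
      rw [List.replicate_succ, eval]
      norm_num
      rw [ih]
  · have hbound := abs_bound
    have hg : Filter.Tendsto (fun n : ℕ => ((1:ℝ)/9)^n) Filter.atTop (nhds 0) :=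
      tendsto_pow_atTop_nhds_zero_of_lt_one (by norm_num) (by norm_num)
    have h0 := squeeze_zero (g := fun n : ℕ => ((1:ℝ)/9)^n) (fun n => abs_nonneg _) hbound hg
    rw [tendsto_iff_dist_tendsto_zero]
    simpa [Real.dist_eq] using h0
end
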